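/- Let N ≥ 2, κ ∈ ℝ with κ ≠ 0, and b₁, …, b_N ∈ ℝ with bₖ ≠ 1 for all k, and suppose that for every m ∈ {2, …, N} one has Σ_{i=1}^{m} bᵢ ≠ m·b_m. Define on (0,∞)^N × ℝ^N the functions 𝖧ₖ(q,p) = (1/2)·(pₖ² + qₖ² + bₖ/qₖ² − κ·qₖ·pₖ) for k = 1, …, N, and C^[m](q,p) = Σ_{1 ≤ i < j ≤ m} [(qᵢ·pⱼ − qⱼ·pᵢ)² + bᵢ·qⱼ²/qᵢ² + bⱼ·qᵢ²/qⱼ²] + Σ_{j=1}^{m} bⱼ for m = 2, …, N. Then the 2N−1 gradient vectors of these functions, evaluated at the point q = (1, …, 1), p = (0, …, 0), are linearly independent in ℝ^{2N}. -/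

import Mathlib

open Finset

/-- Partial derivative of `F(q,p)` with respect to `qₖ`. -/
noncomputable def pderivQ {N : ℕ} (F : (Fin N → ℝ) → (Fin N → ℝ) → ℝ) (k : Fin N)
    (q p : Fin N → ℝ) : ℝ :=
  deriv (fun x => F (Function.update q k x) p) (q k)

/-- Partial derivative of `F(q,p)` with respect to `pₖ`. -/
noncomputable def pderivP {N : ℕ} (F : (Fin N → ℝ) → (Fin N → ℝ) → ℝ) (k : Fin N)
    (q p : Fin N → ℝ) : ℝ :=
  deriv (fun x => F q (Function.update p k x)) (p k)

/-- The gradient of `F(q,p)` at `(q,p)`, as a vector in `ℝ^{2N}`. -/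
noncomputable def gradAt {N : ℕ} (F : (Fin N → ℝ) → (Fin N → ℝ) → ℝ)
    (q p : Fin N → ℝ) : (Fin N ⊕ Fin N) → ℝ :=
  Sum.elim (fun k => pderivQ F k q p) (fun k => pderivP F k q p)

/-- The `k`-th one degree of freedom invariant of the dSW system. -/
noncomputable def Hk {N : ℕ} (κ : ℝ) (b : Fin N → ℝ) (k : Fin N)
    (q p : Fin N → ℝ) : ℝ :=
  (1 / 2) * ((p k) ^ 2 + (q k) ^ 2 + b k / (q k) ^ 2 - κ * q k * p k)

/-- The left coalgebraic invariant `C^[m]`. -/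
noncomputable def Cleft {N : ℕ} (b : Fin N → ℝ) (m : ℕ)
    (q p : Fin N → ℝ) : ℝ :=
  (∑ t ∈ (Finset.univ : Finset (Fin N × Fin N)).filter
      (fun t => t.1 < t.2 ∧ t.2.val < m),
    ((q t.1 * p t.2 - q t.2 * p t.1) ^ 2
      + b t.1 * (q t.2) ^ 2 / (q t.1) ^ 2 + b t.2 * (q t.1) ^ 2 / (q t.2) ^ 2))
  + ∑ j ∈ Finset.univ.filter (fun j : Fin N => j.val < m), b j

/-! At `q = (1, …, 1)`, `p = 0` the `p`-gradient of `𝖧ₖ` is `-(κ/2) eₖ`, while every `C^[m]` is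
even in `p` and so has vanishing `p`-gradient: projecting onto the `p`-coordinates separates the
`𝖧ₖ` from the `C^[m]`. The `C^[m]` form a triangular family in the `q`-coordinates: `C^[m]` does
not depend on `q_j` for `j > m`, and its `q_m`-derivative is `2 (b₁ + ⋯ + b_m - m b_m) ≠ 0`. -/

open Function

section LinearIndependence

variable {R M M' ι ι' : Type*} [Ring R] [AddCommGroup M] [Module R M] [AddCommGroup M']
  [Module R M']

theorem LinearIndependent.sumElim_of_map_eq_zero [Fintype ι] [Fintype ι'] {v : ι → M}
    {w : ι' → M} (f : M →ₗ[R] M') (hv : LinearIndependent R (f ∘ v))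
    (hw : LinearIndependent R w) (hfw : ∀ j, f (w j) = 0) :
    LinearIndependent R (Sum.elim v w) := by
  rw [Fintype.linearIndependent_iff] at hv hw ⊢
  intro g hg
  simp only [Fintype.sum_sum_type, Sum.elim_inl, Sum.elim_inr] at hg
  have hgv : ∀ i, g (Sum.inl i) = 0 :=
    hv _ (by simpa [map_add, map_sum, hfw] using congrArg f hg)
  have hgw : ∀ j, g (Sum.inr j) = 0 := hw _ (by simpa [hgv] using hg)
  rintro (i | j)
  exacts [hgv i, hgw j]

theorem linearIndependent_of_triangular [NoZeroDivisors R] [LinearOrder ι] [Fintype ι]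
    {v : ι → M} (φ : ι → M →ₗ[R] R) (hdiag : ∀ i, φ i (v i) ≠ 0)
    (hlower : ∀ i j, j < i → φ i (v j) = 0) : LinearIndependent R v := by
  rw [Fintype.linearIndependent_iff]
  intro g hg i
  induction i using WellFoundedGT.induction with
  | _ i ih =>
  have hφ : ∑ j, g j * φ i (v j) = 0 := by simpa using congrArg (φ i) hg
  rw [sum_eq_single i (fun j _ hji => ?_) (by simp)] at hφ
  · exact (mul_eq_zero.mp hφ).resolve_right (hdiag i)
  · rcases hji.lt_or_gt with hj | hj
    · rw [hlower i j hj, mul_zero]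
    · rw [ih j hj, zero_mul]

end LinearIndependence

theorem Function.Even.deriv_zero {F : Type*} [NormedAddCommGroup F] [NormedSpace ℝ F]
    {f : ℝ → F} (hf : f.Even) : deriv f 0 = 0 := by
  have h := deriv_comp_neg f 0
  rw [funext hf, neg_zero] at h
  have h2 : (2 : ℝ) • deriv f 0 = 0 := by
    rw [two_smul]; nth_rewrite 2 [h]; exact add_neg_cancel _
  exact (smul_eq_zero.mp h2).resolve_left two_ne_zero

theorem hasDerivAt_mul_sq_add_div_sq (u v : ℝ) :
    HasDerivAt (fun x : ℝ => u * x ^ 2 + v / x ^ 2) (2 * (u - v)) 1 := by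
  have hsq : HasDerivAt (fun x : ℝ => x ^ 2) 2 1 := by simpa using hasDerivAt_pow 2 (1 : ℝ)
  exact ((hsq.const_mul u).fun_add ((hasDerivAt_const 1 v).fun_div hsq (by norm_num))).congr_deriv
    (by ring)

section PartialDerivatives

variable {N : ℕ} {F : (Fin N → ℝ) → (Fin N → ℝ) → ℝ} {k : Fin N} {q p : Fin N → ℝ}

theorem pderivQ_eq_zero_of_forall_update (h : ∀ x, F (update q k x) p = F q p) :
    pderivQ F k q p = 0 := by
  simp [pderivQ, h]

theorem pderivP_eq_zero_of_forall_update (h : ∀ x, F q (update p k x) = F q p) :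
    pderivP F k q p = 0 := by
  simp [pderivP, h]

theorem pderivP_zero_eq_zero_of_even (h : ∀ p, F q (-p) = F q p) : pderivP F k q 0 = 0 :=
  Function.Even.deriv_zero fun x => by
    show F q (update 0 k (-x)) = F q (update 0 k x)
    rw [← Pi.single, Pi.single_neg, h]; rfl

end PartialDerivatives

section SmorodinskyWinternitz

variable {N : ℕ} (b : Fin N → ℝ)

theorem pderivP_Hk (κ : ℝ) (k j : Fin N) (q p : Fin N → ℝ) :
    pderivP (Hk κ b k) j q p = (Pi.single k (p k - κ * q k / 2) : Fin N → ℝ) j := by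
  rcases eq_or_ne j k with rfl | hjk
  · have hline : HasDerivAt (fun x => Hk κ b j q (update p j x)) (p j - κ * q j / 2) (p j) := by
      simp only [Hk, update_self]
      exact (((((hasDerivAt_pow 2 (p j)).add_const _).add_const _).fun_sub
        ((hasDerivAt_id _).const_mul (κ * q j))).const_mul (1 / 2)).congr_deriv (by simp; ring)
    rw [Pi.single_eq_same]
    exact hline.deriv
  · rw [Pi.single_eq_of_ne hjk]
    exact pderivP_eq_zero_of_forall_update fun x => by simp [Hk, update_of_ne hjk.symm]

theorem Cleft_neg_right (m : ℕ) (q p : Fin N → ℝ) : Cleft b m q (-p) = Cleft b m q p := by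
  simp only [Cleft, Pi.neg_apply]
  congr 1
  exact sum_congr rfl fun t _ => by ring

theorem Cleft_update_of_le {m : ℕ} {k : Fin N} (hk : m ≤ k) (q p : Fin N → ℝ) (x : ℝ) :
    Cleft b m (update q k x) p = Cleft b m q p := by
  simp only [Cleft]
  congr 1
  refine sum_congr rfl fun t ht => ?_
  simp only [mem_filter, mem_univ, true_and, Fin.lt_def] at ht
  rw [update_of_ne (by omega), update_of_ne (by omega)]

theorem sum_pairs_ite_snd_eq {A : Type*} [AddCommMonoid A] (c : Fin N → A) (k : Fin N) :
    ∑ t ∈ univ.filter (fun t : Fin N × Fin N => t.1 < t.2 ∧ t.2.val < k + 1),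
      (if t.2 = k then c t.1 else 0) = ∑ i ∈ Iio k, c i := by
  rw [← sum_filter]
  have hpairs : (univ.filter (fun t : Fin N × Fin N => t.1 < t.2 ∧ t.2.val < k + 1)).filter
      (fun t => t.2 = k) = (Iio k).image (fun i => (i, k)) := by
    ext ⟨i, j⟩
    simp only [mem_filter, mem_univ, true_and, mem_image, mem_Iio, Prod.mk.injEq]
    constructor
    · rintro ⟨⟨hij, -⟩, rfl⟩
      exact ⟨i, hij, rfl, rfl⟩
    · rintro ⟨i, hik, rfl, rfl⟩
      exact ⟨⟨hik, by omega⟩, rfl⟩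
  rw [hpairs, sum_image fun i _ i' _ h => (Prod.mk.inj h).1]

theorem sum_filter_lt_succ (k : Fin N) :
    ∑ i ∈ univ.filter (fun i : Fin N => i.val < k + 1), b i = ∑ i ∈ Iio k, b i + b k := by
  have : univ.filter (fun i : Fin N => i.val < k + 1) = insert k (Iio k) := by
    ext i
    simp only [mem_filter, mem_univ, true_and, mem_insert, mem_Iio, Fin.lt_def, Fin.ext_iff]
    omega
  rw [this, sum_insert (by simp), add_comm]

theorem pderivQ_Cleft_succ_self (k : Fin N) :
    pderivQ (Cleft b (k + 1)) k 1 0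
      = 2 * (∑ i ∈ univ.filter (fun i : Fin N => i.val < k + 1), b i - (k + 1 : ℕ) * b k) := by
  have hline : HasDerivAt (fun x => Cleft b (k + 1) (update 1 k x) 0)
      (∑ t ∈ univ.filter (fun t : Fin N × Fin N => t.1 < t.2 ∧ t.2.val < k + 1),
        (if t.2 = k then 2 * (b t.1 - b k) else 0)) 1 := by
    refine (HasDerivAt.fun_sum fun t ht => ?_).add_const _
    simp only [mem_filter, mem_univ, true_and, Fin.lt_def] at ht
    have h1 : t.1 ≠ k := fun h => by rw [← h] at ht; omega
    split_ifs with h2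
    · refine (hasDerivAt_mul_sq_add_div_sq (b t.1) (b k)).congr_of_eventuallyEq
        (Filter.Eventually.of_forall fun x => ?_)
      simp [update_of_ne h1, h2]
    · refine (hasDerivAt_const _ (b t.1 + b t.2)).congr_of_eventuallyEq
        (Filter.Eventually.of_forall fun x => ?_)
      simp [update_of_ne h1, update_of_ne h2]
  rw [pderivQ, Pi.one_apply, hline.deriv, sum_pairs_ite_snd_eq (fun i => 2 * (b i - b k)),
    sum_filter_lt_succ, ← mul_sum, sum_sub_distrib, sum_const, Fin.card_Iio, nsmul_eq_mul]
  push_cast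
  ring

end SmorodinskyWinternitz

theorem dSW_gradients_linearIndependent (N : ℕ)
    (κ : ℝ) (hκ : κ ≠ 0) (b : Fin N → ℝ)
    (hbm : ∀ m : ℕ, (hm2 : 2 ≤ m) → (hmN : m ≤ N) →
      (∑ i ∈ Finset.univ.filter (fun i : Fin N => i.val < m), b i)
        ≠ (m : ℝ) * b ⟨m - 1, by omega⟩) :
    LinearIndependent ℝ (Sum.elim
      (fun k : Fin N => gradAt (Hk κ b k) (fun _ => 1) (fun _ => 0))
      (fun mm : Fin (N - 1) => gradAt (Cleft b (mm.val + 2)) (fun _ => 1) (fun _ => 0))) := by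
  refine LinearIndependent.sumElim_of_map_eq_zero (LinearMap.funLeft ℝ ℝ Sum.inr) ?_ ?_ ?_
  · have hp : (LinearMap.funLeft ℝ ℝ Sum.inr ∘
          fun k : Fin N => gradAt (Hk κ b k) (fun _ => 1) (fun _ => 0))
        = fun k => Pi.single k (-(κ / 2)) := by
      funext k j
      simp [gradAt, pderivP_Hk]
    rw [hp]
    exact Pi.linearIndependent_single_of_ne_zero fun _ => by simpa using hκ
  · refine linearIndependent_of_triangular
      (fun mm => LinearMap.proj (Sum.inl ⟨mm.val + 1, by omega⟩)) (fun mm => ?_) fun mm mm' h => ?_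
    · exact (pderivQ_Cleft_succ_self b ⟨mm.val + 1, by omega⟩).trans_ne <|
        mul_ne_zero two_ne_zero <| sub_ne_zero.mpr (hbm (mm.val + 2) (by omega) (by omega))
    · exact pderivQ_eq_zero_of_forall_update (Cleft_update_of_le b (by simp; omega) _ _)
  · intro mm
    funext k
    exact pderivP_zero_eq_zero_of_even (Cleft_neg_right b _ _)
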